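/- Let a < 0, b ∈ ℝ, and define l(n) = logit(Φ(a·√n + b)) for n > 0, where Φ is the standard normal CDF and logit(x) = log(x) − log(1−x). Then l is differentiable on (0,∞) and lim_{n→∞} l′(n) = −a²/2. -/

import Mathlib

/-!
Since `logit' p = 1 / (p (1 - p))`, the derivative of `n ↦ logit (Φ (u n))` with
`u n = a √n + b` is `φ(u) u' / (Φ(u) (1 - Φ(u)))`. As `n → ∞` we have `u → -∞`, so
`Φ(u) → 0` and, by Mills' ratio `Φ(u) ~ φ(u) / (-u)`, this is asymptotic to
`-u u' = -(a √n + b) a / (2 √n) → -a² / 2`.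
-/

open Filter MeasureTheory Set

/-- Standard normal CDF. -/
noncomputable def Phi (x : ℝ) : ℝ :=
  ∫ t in Set.Iio x, (Real.sqrt (2 * Real.pi))⁻¹ * Real.exp (-t ^ 2 / 2)

/-- Standard normal density. -/
noncomputable def stdPdf (x : ℝ) : ℝ := (Real.sqrt (2 * Real.pi))⁻¹ * Real.exp (-x ^ 2 / 2)

/-- Standard normal quantile function. -/
noncomputable def PhiInv : ℝ → ℝ := Function.invFun Phi

/-- Logit function. -/
noncomputable def logit (x : ℝ) : ℝ := Real.log x - Real.log (1 - x)

open ProbabilityTheory Topology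

lemma stdPdf_eq_gaussianPDFReal : stdPdf = gaussianPDFReal 0 1 := by
  ext x
  simp [stdPdf, gaussianPDFReal]

lemma stdPdf_pos (x : ℝ) : 0 < stdPdf x := by
  rw [stdPdf_eq_gaussianPDFReal]
  exact gaussianPDFReal_pos 0 1 x one_ne_zero

lemma integrable_stdPdf : Integrable stdPdf := by
  rw [stdPdf_eq_gaussianPDFReal]
  exact integrable_gaussianPDFReal 0 1

lemma continuous_stdPdf : Continuous stdPdf := by
  unfold stdPdf
  fun_prop

lemma hasDerivAt_stdPdf (x : ℝ) : HasDerivAt stdPdf (-x * stdPdf x) x := by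
  have h : HasDerivAt (fun t : ℝ => -t ^ 2 / 2) (-x) x := by
    simpa [neg_div] using ((hasDerivAt_pow 2 x).neg).div_const 2
  exact (h.exp.const_mul (Real.sqrt (2 * Real.pi))⁻¹).congr_deriv (by rw [stdPdf]; ring)

lemma tendsto_sq_atBot_atTop : Tendsto (fun x : ℝ => x ^ 2) atBot atTop := by
  simpa [Function.comp_def] using
    (tendsto_pow_atTop (α := ℝ) two_ne_zero).comp tendsto_neg_atBot_atTop

lemma tendsto_stdPdf_atBot : Tendsto stdPdf atBot (𝓝 0) := by
  have hsq : Tendsto (fun x : ℝ => -x ^ 2 / 2) atBot atBot := by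
    simpa [Function.comp_def, neg_div] using
      tendsto_neg_atTop_atBot.comp (tendsto_sq_atBot_atTop.atTop_div_const (zero_lt_two' ℝ))
  have h := (Real.tendsto_exp_atBot.comp hsq).const_mul (Real.sqrt (2 * Real.pi))⁻¹
  rwa [mul_zero] at h

lemma Phi_eq_integral_Iic (x : ℝ) : Phi x = ∫ t in Iic x, stdPdf t :=
  (integral_Iic_eq_integral_Iio).symm

lemma Phi_eq_cdf : Phi = cdf (gaussianReal 0 1) := by
  ext x
  rw [cdf_eq_real, measureReal_def, gaussianReal_apply_eq_integral 0 one_ne_zero,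
    ENNReal.toReal_ofReal (integral_nonneg (gaussianPDFReal_nonneg 0 1)),
    Phi_eq_integral_Iic, stdPdf_eq_gaussianPDFReal]

lemma hasDerivAt_Phi (x : ℝ) : HasDerivAt Phi (stdPdf x) x := by
  have hPhi : Phi = fun y => (∫ t in (0 : ℝ)..y, stdPdf t) + Phi 0 := by
    ext y
    rw [Phi_eq_integral_Iic, Phi_eq_integral_Iic, ← intervalIntegral.integral_Iic_sub_Iic
      integrable_stdPdf.integrableOn integrable_stdPdf.integrableOn, sub_add_cancel]
  rw [hPhi]
  exact (intervalIntegral.integral_hasDerivAt_right integrable_stdPdf.intervalIntegrable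
    (continuous_stdPdf.stronglyMeasurableAtFilter _ _) continuous_stdPdf.continuousAt).add_const _

lemma strictMono_Phi : StrictMono Phi :=
  strictMono_of_deriv_pos fun x => (hasDerivAt_Phi x).deriv ▸ stdPdf_pos x

lemma Phi_pos (x : ℝ) : 0 < Phi x :=
  calc 0 ≤ Phi (x - 1) := Phi_eq_cdf ▸ cdf_nonneg _ _
    _ < Phi x := strictMono_Phi (sub_one_lt x)

lemma Phi_lt_one (x : ℝ) : Phi x < 1 :=
  calc Phi x < Phi (x + 1) := strictMono_Phi (lt_add_one x)
    _ ≤ 1 := Phi_eq_cdf ▸ cdf_le_one _ _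

lemma tendsto_Phi_atBot : Tendsto Phi atBot (𝓝 0) :=
  Phi_eq_cdf ▸ tendsto_cdf_atBot _

lemma hasDerivAt_stdPdf_div_neg {x : ℝ} (hx : x ≠ 0) :
    HasDerivAt (fun t => stdPdf t / -t) (stdPdf x * (1 + (x ^ 2)⁻¹)) x := by
  refine ((hasDerivAt_stdPdf x).div (hasDerivAt_neg x) (neg_ne_zero.mpr hx)).congr_deriv ?_
  field_simp
  ring

/-- Mills' ratio `Φ(x) ~ φ(x) / (-x)` as `x → -∞`, by l'Hôpital:
`(φ(x) / (-x))' = φ(x) (1 + x⁻²)`. -/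
lemma tendsto_stdPdf_div_neg_mul_Phi_atBot :
    Tendsto (fun x => stdPdf x / (-x * Phi x)) atBot (𝓝 1) := by
  have hlim : Tendsto (fun x : ℝ => stdPdf x / -x) atBot (𝓝 0) := by
    simpa [div_eq_mul_inv] using tendsto_stdPdf_atBot.mul tendsto_neg_atBot_atTop.inv_tendsto_atTop
  have hratio :
      Tendsto (fun x : ℝ => stdPdf x * (1 + (x ^ 2)⁻¹) / stdPdf x) atBot (𝓝 1) := by
    have h : Tendsto (fun x : ℝ => 1 + (x ^ 2)⁻¹) atBot (𝓝 1) := by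
      simpa using tendsto_const_nhds.add tendsto_sq_atBot_atTop.inv_tendsto_atTop
    exact h.congr fun x => (mul_div_cancel_left₀ _ (stdPdf_pos x).ne').symm
  have := HasDerivAt.lhopital_zero_atBot
    ((eventually_lt_atBot 0).mono fun x hx => hasDerivAt_stdPdf_div_neg hx.ne)
    (Eventually.of_forall hasDerivAt_Phi) (Eventually.of_forall fun x => (stdPdf_pos x).ne')
    hlim tendsto_Phi_atBot hratio
  simpa [div_div] using this

lemma hasDerivAt_logit {p : ℝ} (h0 : p ≠ 0) (h1 : p ≠ 1) :
    HasDerivAt logit (p * (1 - p))⁻¹ p := by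
  have h1' : 1 - p ≠ 0 := sub_ne_zero.mpr h1.symm
  refine ((Real.hasDerivAt_log h0).sub
    ((Real.hasDerivAt_log h1').comp p ((hasDerivAt_id p).const_sub 1))).congr_deriv ?_
  field_simp
  ring

lemma hasDerivAt_logit_Phi (x : ℝ) :
    HasDerivAt (fun x => logit (Phi x)) (stdPdf x / (Phi x * (1 - Phi x))) x := by
  rw [div_eq_inv_mul]
  exact (hasDerivAt_logit (Phi_pos x).ne' (Phi_lt_one x).ne).comp x (hasDerivAt_Phi x)

/-- The left side is the chain-rule derivative of `logit ∘ Φ ∘ u`; by Mills' ratio it is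
asymptotic to `-u · u'`. -/
lemma tendsto_logit_Phi_deriv_mul {α : Type*} {l : Filter α} {u u' : α → ℝ} {L : ℝ}
    (hu : Tendsto u l atBot) (hL : Tendsto (fun n => -u n * u' n) l (𝓝 L)) :
    Tendsto (fun n => stdPdf (u n) / (Phi (u n) * (1 - Phi (u n))) * u' n) l (𝓝 L) := by
  have hmills := tendsto_stdPdf_div_neg_mul_Phi_atBot.comp hu
  have hcompl : Tendsto (fun n => (1 - Phi (u n))⁻¹) l (𝓝 1) := by
    simpa using ((tendsto_const_nhds (x := (1 : ℝ))).sub (tendsto_Phi_atBot.comp hu)).inv₀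
      (by norm_num)
  have h := (hmills.mul hcompl).mul hL
  rw [mul_one, one_mul] at h
  refine h.congr' ((hu.eventually (eventually_lt_atBot 0)).mono fun n hn => ?_)
  have hu0 : u n ≠ 0 := hn.ne
  have hPhi0 : Phi (u n) ≠ 0 := (Phi_pos (u n)).ne'
  have hPhi1 : 1 ≠ Phi (u n) := (Phi_lt_one (u n)).ne'
  simp only [Function.comp_apply]
  field_simp

theorem stmt4 (a b : ℝ) (ha : a < 0) :
    DifferentiableOn ℝ (fun n : ℝ => logit (Phi (a * Real.sqrt n + b))) (Set.Ioi 0) ∧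
    Filter.Tendsto (deriv (fun n : ℝ => logit (Phi (a * Real.sqrt n + b))))
      Filter.atTop (nhds (-a ^ 2 / 2)) := by
  set u : ℝ → ℝ := fun n => a * Real.sqrt n + b
  set u' : ℝ → ℝ := fun n => a * (1 / (2 * Real.sqrt n))
  have hderiv : ∀ n ∈ Ioi (0 : ℝ), HasDerivAt (fun n => logit (Phi (u n)))
      (stdPdf (u n) / (Phi (u n) * (1 - Phi (u n))) * u' n) n := fun n hn =>
    (hasDerivAt_logit_Phi (u n)).comp n
      (((Real.hasDerivAt_sqrt hn.ne').const_mul a).add_const b)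
  refine ⟨fun n hn => (hderiv n hn).differentiableAt.differentiableWithinAt, ?_⟩
  have hu : Tendsto u atTop atBot :=
    tendsto_atBot_add_const_right _ b
      ((tendsto_const_mul_atBot_of_neg ha).mpr Real.tendsto_sqrt_atTop)
  have hL : Tendsto (fun n => -u n * u' n) atTop (𝓝 (-a ^ 2 / 2)) := by
    have h := (tendsto_const_nhds (x := -a ^ 2 / 2)).sub
      ((tendsto_const_nhds (x := a * b / 2)).mul Real.tendsto_sqrt_atTop.inv_tendsto_atTop)
    rw [mul_zero, sub_zero] at h
    refine h.congr' ((eventually_gt_atTop 0).mono fun n hn => ?_)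
    have hsqrt : Real.sqrt n ≠ 0 := (Real.sqrt_pos.mpr hn).ne'
    simp only [u, u', Pi.inv_apply]
    field_simp
    ring
  exact (tendsto_logit_Phi_deriv_mul hu hL).congr'
    ((eventually_gt_atTop 0).mono fun n hn => ((hderiv n hn).deriv).symm)
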